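/- arXiv:2601.09602 — 6 statements merged into one kernel-verified Lean document; each statement's English description precedes it below -/
import Mathlib

section
/- Let G be a finite group with a normal subgroup N, and let p be a prime. If both N and G/N contain a non-Schur p-element (or have order not divisible by p), then G contains a non-Schur p-element or has order not divisible by p. Here a non-Schur element of a group H is an element x with x ∉ [C_H(x), C_H(x)]. -/
/-- A non-Schur element of a group `G` is an element `x` with
`x ∉ [C_G(x), C_G(x)]`. -/
def IsNonSchur {G : Type*} [Group G] (x : G) : Prop :=
  x ∉ ⁅Subgroup.centralizer {x}, Subgroup.centralizer {x}⁆

/-- A `p`-element is an element of `p`-power order. -/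
def IsPElement (p : ℕ) {G : Type*} [Group G] (x : G) : Prop :=
  ∃ n : ℕ, orderOf x = p ^ n

/-- `G` satisfies `S(p)` if it contains a non-Schur `p`-element, or `p ∤ |G|`. -/
def SatisfiesSp (p : ℕ) (G : Type*) [Group G] : Prop :=
  (∃ x : G, IsPElement p x ∧ IsNonSchur x) ∨ ¬ p ∣ Nat.card G

/-- Non-Schur-ness pulls back along any homomorphism. -/
lemma nonSchur_of_map {G Q : Type*} [Group G] [Group Q] (f : G →* Q) (x : G)
    (h : IsNonSchur (f x)) : IsNonSchur x := by
  intro hx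
  apply h
  have hmap : Subgroup.map f (Subgroup.centralizer {x}) ≤ Subgroup.centralizer {f x} := by
    rintro _ ⟨g, hg, rfl⟩
    rw [Subgroup.mem_centralizer_singleton_iff]
    have := (Subgroup.mem_centralizer_singleton_iff.mp hg)
    rw [← map_mul, this, map_mul]
  have hx' := Subgroup.mem_map_of_mem f hx
  rw [Subgroup.map_commutator] at hx'
  exact Subgroup.commutator_mono hmap hmap hx'

/-- `p`-elements lift along surjections of finite groups. -/
lemma exists_pElement_lift {G Q : Type*} [Group G] [Finite G] [Group Q]
    {f : G →* Q} (hf : Function.Surjective f) (p : ℕ) (hp : p.Prime) {y : Q}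
    (hy : IsPElement p y) : ∃ x : G, f x = y ∧ IsPElement p x := by
  obtain ⟨g, rfl⟩ := hf y
  obtain ⟨n, hn⟩ := hy
  have hm0 : orderOf g ≠ 0 := (orderOf_pos g).ne'
  set m := orderOf g with hm
  set q := ordCompl[p] m with hqdef
  have hq : Nat.Coprime p q := Nat.coprime_ordCompl hp hm0
  have hcop : Nat.Coprime q (orderOf (f g)) := by
    rw [hn]
    exact Nat.Coprime.pow_right n hq.symm
  obtain ⟨k, hk⟩ := exists_pow_eq_self_of_coprime hcop
  refine ⟨g ^ (q * k), ?_, ?_⟩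
  · rw [map_pow, pow_mul, hk]
  · have hdvd : orderOf (g ^ (q * k)) ∣ p ^ (m.factorization p) := by
      apply orderOf_dvd_of_pow_eq_one
      rw [← pow_mul]
      have hmul : q * k * p ^ (m.factorization p) = m * k := by
        rw [mul_right_comm, mul_comm q, Nat.ordProj_mul_ordCompl_eq_self]
      rw [hmul, pow_mul, hm, pow_orderOf_eq_one, one_pow]
    obtain ⟨t, -, ht⟩ := (Nat.dvd_prime_pow hp).mp hdvd
    exact ⟨t, ht⟩

/-- The transfer argument: a non-Schur `p`-element of a normal subgroup of
`p'`-index is a non-Schur element of the whole group. -/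
lemma nonSchur_coe {G : Type*} [Group G] [Finite G] {N : Subgroup G} [N.Normal]
    {p : ℕ} (hp : p.Prime) (hpi : ¬ p ∣ N.index) {x' : N} (hxp : IsPElement p x')
    (hx' : IsNonSchur x') : IsNonSchur (x' : G) := by
  intro hx
  apply hx'
  set x : G := (x' : G) with hxdef
  have hxH : x ∈ Subgroup.centralizer {x} :=
    Subgroup.mem_centralizer_singleton_iff.mpr rfl
  set H := Subgroup.centralizer {x} with hHdef
  set xh : H := ⟨x, hxH⟩ with hxh
  have hcomm : ∀ h : H, Commute h xh := by
    intro h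
    exact Subtype.ext ((h.2 x rfl).symm)
  set K := N.subgroupOf H with hKdef
  -- `x` lies in the commutator subgroup of `H`
  have hxc : xh ∈ commutator H := by
    have hmem : x ∈ Subgroup.map H.subtype (commutator H) := by
      rw [commutator_def, Subgroup.map_commutator, ← MonoidHom.range_eq_map,
        Subgroup.range_subtype]
      exact hx
    obtain ⟨c, hc, hcx⟩ := hmem
    rwa [show c = xh from Subtype.ext hcx] at hc
  have hyK : xh ∈ K := Subgroup.mem_subgroupOf.mpr x'.2
  set yk : K := ⟨xh, hyK⟩ with hyk
  let φ : K →* Abelianization K := Abelianization.of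
  have key : ∀ (k : ℕ) (g₀ : H), g₀⁻¹ * xh ^ k * g₀ ∈ K → g₀⁻¹ * xh ^ k * g₀ = xh ^ k := by
    intro k g₀ _
    rw [((hcomm g₀⁻¹).pow_right k).eq, inv_mul_cancel_right]
  have h1 := MonoidHom.transfer_eq_pow φ xh key
  have h2 : MonoidHom.transfer φ xh = 1 :=
    Abelianization.commutator_subset_ker (MonoidHom.transfer φ) hxc
  have h3 : yk ^ K.index ∈ commutator K := by
    have hone : φ (⟨xh ^ K.index, MonoidHom.transfer_eq_pow_aux xh key⟩ : K) = 1 :=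
      h1.symm.trans h2
    have hmem := (QuotientGroup.eq_one_iff
      ((⟨xh ^ K.index, MonoidHom.transfer_eq_pow_aux xh key⟩ : K))).mp hone
    have : yk ^ K.index = ⟨xh ^ K.index, MonoidHom.transfer_eq_pow_aux xh key⟩ :=
      Subtype.ext (by push_cast [hyk]; rfl)
    rwa [this]
  -- the embedding of `K` into `N`
  let e : K →* N :=
    { toFun := fun k => ⟨((k : H) : G), Subgroup.mem_subgroupOf.mp k.2⟩
      map_one' := rfl
      map_mul' := fun a b => rfl }
  have he : Function.Injective e := by
    intro a b hab
    have h : ((a : H) : G) = ((b : H) : G) := congrArg (fun z : ↥N => (z : G)) hab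
    exact Subtype.ext (Subtype.ext h)
  have hey : e yk = x' := Subtype.ext rfl
  -- coprimality and the power trick
  have hord : orderOf yk = orderOf x' := by
    rw [← orderOf_injective e he yk, hey]
  obtain ⟨nn, hnn⟩ := hxp
  have hidx : K.index ∣ N.index := Subgroup.relIndex_dvd_index_of_normal N H
  have hpc : Nat.Coprime (K.index) (orderOf yk) := by
    rw [hord, hnn]
    exact Nat.Coprime.pow_right nn
      (((Nat.Prime.coprime_iff_not_dvd hp).mpr (fun hd => hpi (hd.trans hidx))).symm)
  obtain ⟨mm, hmm⟩ := exists_pow_eq_self_of_coprime hpc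
  have hymem : yk ∈ commutator K := by
    rw [← hmm]
    exact pow_mem h3 mm
  -- push into `N`
  have hle : Subgroup.map e ⊤ ≤ Subgroup.centralizer {x'} := by
    rintro _ ⟨k, -, rfl⟩
    rw [Subgroup.mem_centralizer_singleton_iff]
    exact Subtype.ext (((k : H).2 x rfl).symm)
  have hmem : x' ∈ Subgroup.map e (commutator K) := ⟨yk, hymem, hey⟩
  rw [commutator_def, Subgroup.map_commutator] at hmem
  exact Subgroup.commutator_mono hle hle hmem

theorem sp_of_normal_and_quotient (p : ℕ) (hp : p.Prime) (G : Type*) [Group G] [Finite G]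
    (N : Subgroup G) [N.Normal] (hN : SatisfiesSp p N) (hQ : SatisfiesSp p (G ⧸ N)) :
    SatisfiesSp p G := by
  rcases hQ with ⟨y, hyp, hyns⟩ | hQ
  · obtain ⟨x, hfx, hxp⟩ := exists_pElement_lift (QuotientGroup.mk'_surjective N) p hp hyp
    exact Or.inl ⟨x, hxp, nonSchur_of_map (QuotientGroup.mk' N) x (hfx ▸ hyns)⟩
  rcases hN with ⟨x', hx'p, hx'ns⟩ | hN
  · have hpi : ¬ p ∣ N.index := by rwa [Subgroup.index_eq_card]
    refine Or.inl ⟨(x' : G), ?_, nonSchur_coe hp hpi hx'p hx'ns⟩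
    obtain ⟨n, hn⟩ := hx'p
    exact ⟨n, by rw [Subgroup.orderOf_coe, hn]⟩
  · right
    rw [Subgroup.card_eq_card_quotient_mul_card_subgroup N]
    exact fun h => ((Nat.Prime.dvd_mul hp).mp h).elim hQ hN
end

section
/- Let G be a finite group, p a prime, and P a Sylow p-subgroup of G. If the center of P is not contained in the commutator subgroup [P,P], then G contains a non-Schur p-element. -/
namespace Subgroup

variable {G : Type*} [Group G]

theorem mem_commutator_iff_coe_mem {K : Subgroup G} {x : K} :
    x ∈ _root_.commutator K ↔ (x : G) ∈ ⁅K, K⁆ := by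
  rw [← K.map_subtype_commutator, ← K.coe_subtype, mem_map_iff_mem K.subtype_injective]

theorem mem_of_pow_mem_of_coprime (K : Subgroup G) {g : G} {n : ℕ}
    (hn : n.Coprime (orderOf g)) (h : g ^ n ∈ K) : g ∈ K := by
  obtain ⟨m, hm⟩ := exists_pow_eq_self_of_coprime hn
  exact hm ▸ K.pow_mem h m

theorem pow_index_mem_commutator_of_mem_center (H : Subgroup G) [H.FiniteIndex] {g : G}
    (hgZ : g ∈ center G) (hgG' : g ∈ _root_.commutator G) : g ^ H.index ∈ ⁅H, H⁆ := by
  have hconj : ∀ (k : ℕ) (g₀ : G), g₀⁻¹ * g ^ k * g₀ ∈ H → g₀⁻¹ * g ^ k * g₀ = g ^ k :=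
    fun k g₀ _ => by rw [mul_assoc, ← mem_center_iff.mp (pow_mem hgZ k) g₀, inv_mul_cancel_left]
  have htransfer : (Abelianization.of : H →* Abelianization H)
      ⟨g ^ H.index, MonoidHom.transfer_eq_pow_aux g hconj⟩ = 1 := by
    rw [← MonoidHom.transfer_eq_pow Abelianization.of g hconj]
    exact Abelianization.commutator_subset_ker _ hgG'
  exact mem_commutator_iff_coe_mem.mp ((QuotientGroup.eq_one_iff _).mp htransfer)

end Subgroup

namespace Sylow

open Subgroup

variable {G : Type*} [Group G] {p : ℕ} [Fact p.Prime]

theorem mem_commutator_of_mem_center (P : Sylow p G) [P.FiniteIndex] {g : G} (hgP : g ∈ P)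
    (hgZ : g ∈ center G) (hgG' : g ∈ _root_.commutator G) :
    g ∈ ⁅(P : Subgroup G), (P : Subgroup G)⁆ := by
  obtain ⟨k, hk⟩ := IsPGroup.iff_orderOf.mp P.isPGroup' ⟨g, hgP⟩
  have hcop : (P : Subgroup G).index.Coprime (orderOf g) := by
    rw [← orderOf_mk g hgP, hk]
    exact ((Nat.Prime.coprime_iff_not_dvd Fact.out).mpr P.not_dvd_index).symm.pow_right k
  exact mem_of_pow_mem_of_coprime _ hcop (pow_index_mem_commutator_of_mem_center _ hgZ hgG')

theorem mem_commutator_of_le_centralizer (P : Sylow p G) [P.FiniteIndex] {g : G} {K : Subgroup G}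
    (hPK : (P : Subgroup G) ≤ K) (hK : K ≤ centralizer {g}) (hgP : g ∈ P)
    (hgK : g ∈ ⁅K, K⁆) : g ∈ ⁅(P : Subgroup G), (P : Subgroup G)⁆ := by
  have hgZ : (⟨g, hPK hgP⟩ : K) ∈ center K :=
    mem_center_iff.mpr fun k => Subtype.ext (mem_centralizer_singleton_iff.mp (hK k.2))
  have : (P.subtype hPK : Subgroup K).FiniteIndex :=
    inferInstanceAs ((P : Subgroup G).subgroupOf K).FiniteIndex
  have hgQ := (P.subtype hPK).mem_commutator_of_mem_center (mem_subgroupOf.mpr hgP) hgZ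
    (mem_commutator_iff_coe_mem.mpr hgK)
  have hgP' := mem_map_of_mem K.subtype hgQ
  rwa [map_commutator, Sylow.coe_subtype, map_subgroupOf_eq_of_le hPK] at hgP'

end Sylow

theorem nonSchur_of_center_not_le_commutator (p : ℕ) (hp : p.Prime) (G : Type*) [Group G]
    [Finite G] (P : Sylow p G)
    (h : ¬ Subgroup.center ↥(P : Subgroup G) ≤ commutator ↥(P : Subgroup G)) :
    ∃ x : G, IsPElement p x ∧ IsNonSchur x := by
  have : Fact p.Prime := ⟨hp⟩
  obtain ⟨z, hzZ, hzP'⟩ := SetLike.not_le_iff_exists.mp h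
  have hPC : (P : Subgroup G) ≤ Subgroup.centralizer {(z : G)} := fun g hg =>
    Subgroup.mem_centralizer_singleton_iff.mpr
      (congrArg Subtype.val (Subgroup.mem_center_iff.mp hzZ ⟨g, hg⟩))
  refine ⟨z, ?_, fun hz => hzP' ?_⟩
  · obtain ⟨n, hn⟩ := IsPGroup.iff_orderOf.mp P.isPGroup' z
    exact ⟨n, (Subgroup.orderOf_coe z).trans hn⟩
  · exact Subgroup.mem_commutator_iff_coe_mem.mpr
      (P.mem_commutator_of_le_centralizer hPC le_rfl z.2 hz)
end

section
/- Let G be a finite group, p a prime, and suppose there exist an element x ∈ G and a Sylow p-subgroup Q of the centralizer C_G(x) such that x ∈ Q but x ∉ [Q,Q]. Then G contains a non-Schur p-element; in fact x itself is a non-Schur p-element. -/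
/-!
Write `C = C_G(x)`. Since `x` is central in `C`, the transfer `C → Q/[Q,Q]` sends `x` to
`x ^ |C : Q|` modulo `[Q,Q]`. If `x ∈ [C,C]` the transfer kills `x`, so `x ^ |C : Q| ∈ [Q,Q]`;
as `|C : Q|` is prime to `p` and `x` is a `p`-element, this forces `x ∈ [Q,Q]`.
-/

theorem IsPGroup.isPElement_of_mem {p : ℕ} [Fact p.Prime] {G : Type*} [Group G]
    {H : Subgroup G} (hH : IsPGroup p H) {g : G} (hg : g ∈ H) : IsPElement p g := by
  obtain ⟨k, hk⟩ := IsPGroup.iff_orderOf.mp hH ⟨g, hg⟩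
  exact ⟨k, by rwa [Subgroup.orderOf_mk] at hk⟩

theorem Subgroup.isPElement_coe_iff {p : ℕ} {G : Type*} [Group G] {H : Subgroup G} {h : H} :
    IsPElement p (h : G) ↔ IsPElement p h := by
  simp only [IsPElement, Subgroup.orderOf_coe]

theorem Subgroup.coe_mem_commutator_iff {G : Type*} [Group G] {H : Subgroup G} {h : H} :
    (h : G) ∈ ⁅H, H⁆ ↔ h ∈ _root_.commutator H := by
  rw [← H.map_subtype_commutator]
  exact mem_map_iff_mem H.subtype_injective

theorem Subgroup.mk_mem_center_centralizer_singleton {G : Type*} [Group G] {x : G}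
    (hx : x ∈ centralizer {x}) : (⟨x, hx⟩ : centralizer {x}) ∈ center (centralizer {x}) :=
  mem_center_iff.mpr fun g => Subtype.ext (mem_centralizer_singleton_iff.mp g.2)

theorem Subgroup.pow_index_mem_commutator_of_mem_center_s2 {G : Type*} [Group G]
    (H : Subgroup G) [H.FiniteIndex] {z : G} (hz : z ∈ center G)
    (hz' : z ∈ _root_.commutator G) : z ^ H.index ∈ ⁅H, H⁆ := by
  have conj_pow (k : ℕ) (g₀ : G) (_ : g₀⁻¹ * z ^ k * g₀ ∈ H) :
      g₀⁻¹ * z ^ k * g₀ = z ^ k := by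
    rw [mem_center_iff.mp (pow_mem hz k) g₀⁻¹, inv_mul_cancel_right]
  have transfer_eq := MonoidHom.transfer_eq_pow (Abelianization.of (G := H)) z conj_pow
  rw [Abelianization.commutator_subset_ker _ hz', eq_comm] at transfer_eq
  exact coe_mem_commutator_iff.mpr ((QuotientGroup.eq_one_iff _).mp transfer_eq)

theorem Sylow.mem_commutator_of_mem_center_s2 {p : ℕ} [Fact p.Prime] {G : Type*} [Group G]
    (P : Sylow p G) [P.FiniteIndex] {z : G} (hz : z ∈ Subgroup.center G) (hzP : z ∈ P)
    (hz' : z ∈ commutator G) : z ∈ ⁅(P : Subgroup G), (P : Subgroup G)⁆ := by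
  have coprime : P.index.Coprime (orderOf z) := by
    have := P.isPGroup'.orderOf_coprime
      ((Nat.Prime.coprime_iff_not_dvd Fact.out).mpr P.not_dvd_index) ⟨z, hzP⟩
    rwa [Subgroup.orderOf_mk, Nat.coprime_comm] at this
  obtain ⟨m, hm⟩ := exists_pow_eq_self_of_coprime coprime
  exact hm ▸ pow_mem ((P : Subgroup G).pow_index_mem_commutator_of_mem_center_s2 hz hz') m

theorem nonSchur_of_sylow_of_centralizer (p : ℕ) (hp : p.Prime) (G : Type*) [Group G]
    [Finite G] (x : G) (hx : x ∈ Subgroup.centralizer {x})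
    (Q : Sylow p ↥(Subgroup.centralizer {x}))
    (hxQ : (⟨x, hx⟩ : ↥(Subgroup.centralizer {x})) ∈ (Q : Subgroup ↥(Subgroup.centralizer {x})))
    (hxQ' : (⟨x, hx⟩ : ↥(Subgroup.centralizer {x})) ∉
      ⁅(Q : Subgroup ↥(Subgroup.centralizer {x})), (Q : Subgroup ↥(Subgroup.centralizer {x}))⁆) :
    (IsPElement p x ∧ IsNonSchur x) ∧ ∃ y : G, IsPElement p y ∧ IsNonSchur y := by
  have : Fact p.Prime := ⟨hp⟩
  have hpe : IsPElement p x := Subgroup.isPElement_coe_iff.mpr (Q.isPGroup'.isPElement_of_mem hxQ)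
  have hns : IsNonSchur x := fun hx_comm =>
    hxQ' (Q.mem_commutator_of_mem_center_s2 (Subgroup.mk_mem_center_centralizer_singleton hx) hxQ
      (Subgroup.coe_mem_commutator_iff.mp hx_comm))
  exact ⟨⟨hpe, hns⟩, x, hpe, hns⟩
end

section
/- Every finite p-solvable group G whose order is divisible by p contains a non-Schur p-element. -/
/-- A finite group is p-solvable if it has a normal series in which every quotient
is either a p-group (p-power order) or has order coprime to p. -/
def IsPSolvable (p : ℕ) (G : Type*) [Group G] : Prop :=
  ∃ (n : ℕ) (H : Fin (n + 1) → Subgroup G),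
    H 0 = ⊥ ∧ H (Fin.last n) = ⊤ ∧
    ∀ i : Fin n, H i.castSucc ≤ H i.succ ∧
      ((H i.castSucc).subgroupOf (H i.succ)).Normal ∧
      ((∃ k : ℕ, (H i.castSucc).relIndex ↑(H i.succ) = p ^ k) ∨
        Nat.Coprime ((H i.castSucc).relIndex ↑(H i.succ)) p)

/-! Induct along the series `1 = H₀ ◁ H₁ ◁ ⋯ ◁ Hₙ = G`. If `p` divides `|Hᵢ₊₁ : Hᵢ|`, then
`Hᵢ₊₁ / Hᵢ` is a nontrivial `p`-group, hence not perfect; an element outside its commutator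
subgroup is non-Schur, and so is any lift of it of `p`-power order, because non-Schur elements
pull back along homomorphisms. Otherwise the index is prime to `p`, and a non-Schur `p`-element
`x` of `Hᵢ` stays non-Schur in `Hᵢ₊₁`: `x` is central in `C = C(x)`, so the transfer
`C → (C ∩ Hᵢ)ᵃᵇ` sends `x` to `x ^ |C : C ∩ Hᵢ|`; if `x ∈ [C, C]`, this power of `x`, and with
it `x` itself, lies in `[C ∩ Hᵢ, C ∩ Hᵢ]`. -/

open Subgroup

section

variable {G H : Type*} [Group G] [Group H]

theorem IsNonSchur.of_map (f : G →* H) {x : G} (hx : IsNonSchur (f x)) : IsNonSchur x := by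
  intro hmem
  have hmap := mem_map_of_mem f hmem
  rw [map_commutator] at hmap
  have hC := (map_centralizer_le_centralizer_image {x} f).trans_eq
    (by rw [Set.image_singleton])
  exact hx (commutator_mono hC hC hmap)

theorem isNonSchur_of_notMem_commutator {x : G} (hx : x ∉ commutator G) : IsNonSchur x :=
  fun hmem => hx (commutator_mono le_top le_top hmem)

theorem IsNonSchur.map_equiv (e : G ≃* H) {x : G} (hx : IsNonSchur x) : IsNonSchur (e x) :=
  of_map e.symm.toMonoidHom (by simpa using hx)

theorem IsPElement.map_equiv {p : ℕ} (e : G ≃* H) {x : G} (hx : IsPElement p x) :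
    IsPElement p (e x) := by
  rwa [IsPElement, MulEquiv.orderOf_eq]

theorem IsPGroup.isPElement {p : ℕ} [Fact p.Prime] (hG : IsPGroup p G) (x : G) :
    IsPElement p x :=
  IsPGroup.iff_orderOf.mp hG x

theorem IsPGroup.exists_notMem_commutator {p : ℕ} [Fact p.Prime] [Finite G] [Nontrivial G]
    (hG : IsPGroup p G) : ∃ x : G, x ∉ commutator G := by
  have := hG.isNilpotent
  obtain ⟨x, -, hx⟩ := SetLike.exists_of_lt (Group.IsSolvable.commutator_lt_top_of_nontrivial G)
  exact ⟨x, hx⟩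

theorem exists_isPElement_map_eq {p : ℕ} (hp : p.Prime) [Finite G] {f : G →* H}
    (hf : Function.Surjective f) {y : H} (hy : IsPElement p y) :
    ∃ x : G, IsPElement p x ∧ f x = y := by
  obtain ⟨g, rfl⟩ := hf y
  obtain ⟨a, ha⟩ := hy
  set m := ordCompl[p] (orderOf g)
  have hm : m.Coprime (orderOf (f g)) :=
    ha ▸ ((Nat.coprime_ordCompl hp (orderOf_pos g).ne').pow_left a).symm
  obtain ⟨t, ht⟩ := exists_pow_eq_self_of_coprime hm
  refine ⟨g ^ (m * t), ?_, by rw [map_pow, pow_mul, ht]⟩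
  have hpow : (g ^ (m * t)) ^ ordProj[p] (orderOf g) = 1 := by
    rw [← pow_mul, mul_right_comm, mul_comm m, Nat.ordProj_mul_ordCompl_eq_self, pow_mul,
      pow_orderOf_eq_one, one_pow]
  obtain ⟨k, -, hk⟩ := (Nat.dvd_prime_pow hp).mp (orderOf_dvd_of_pow_eq_one hpow)
  exact ⟨k, hk⟩

theorem exists_isPElement_isNonSchur_of_isPGroup_quotient {p : ℕ} [Fact p.Prime] [Finite G]
    (N : Subgroup G) [N.Normal] [Nontrivial (G ⧸ N)] (hN : IsPGroup p (G ⧸ N)) :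
    ∃ x : G, IsPElement p x ∧ IsNonSchur x := by
  obtain ⟨y, hy⟩ := hN.exists_notMem_commutator
  obtain ⟨x, hxp, rfl⟩ :=
    exists_isPElement_map_eq Fact.out (QuotientGroup.mk'_surjective N) (hN.isPElement y)
  exact ⟨x, hxp, (isNonSchur_of_notMem_commutator hy).of_map _⟩

theorem Subgroup.pow_index_mem_commutator_of_mem_center_s5 (K : Subgroup G) [K.FiniteIndex] {z : G}
    (hz : z ∈ center G) (hzc : z ∈ _root_.commutator G) : z ^ K.index ∈ ⁅K, K⁆ := by
  have key : ∀ (k : ℕ) (g : G), g⁻¹ * z ^ k * g ∈ K → g⁻¹ * z ^ k * g = z ^ k := by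
    intro k g _
    rw [mul_assoc, ← mem_center_iff.mp (pow_mem hz k) g, inv_mul_cancel_left]
  have htr := MonoidHom.transfer_eq_pow (Abelianization.of : K →* Abelianization K) z key
  rw [Abelianization.commutator_subset_ker _ hzc, eq_comm, ← MonoidHom.mem_ker,
    Abelianization.ker_of] at htr
  rw [← K.map_subtype_commutator]
  exact ⟨_, htr, rfl⟩

theorem Subgroup.map_subtype_centralizer_singleton (N : Subgroup G) (x : N) :
    (centralizer {x}).map N.subtype = N ⊓ centralizer {(x : G)} := by
  ext y
  simp only [mem_map, mem_inf, mem_centralizer_singleton_iff, coe_subtype]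
  constructor
  · rintro ⟨y, hy, rfl⟩
    exact ⟨y.2, congrArg Subtype.val hy⟩
  · rintro ⟨hyN, hy⟩
    exact ⟨⟨y, hyN⟩, Subtype.ext hy, rfl⟩

theorem IsNonSchur.coe_of_coprime_index [Finite G] {N : Subgroup G} [N.Normal] {x : N}
    (hx : IsNonSchur x) (hcop : N.index.Coprime (orderOf x)) : IsNonSchur (x : G) := by
  intro hmem
  set C := centralizer {(x : G)}
  set z : C := ⟨x, mem_centralizer_singleton_iff.mpr rfl⟩
  have hz : z ∈ center C := mem_center_iff.mpr fun c => Subtype.ext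
    (mem_centralizer_singleton_iff.mp c.2)
  have hzc : z ∈ commutator C := by
    rw [← C.map_subtype_commutator] at hmem
    exact (mem_map_iff_mem C.subtype_injective).mp hmem
  have hpow : (x : G) ^ N.relIndex C ∈ ⁅N ⊓ C, N ⊓ C⁆ := by
    have :=
      mem_map_of_mem C.subtype ((N.subgroupOf C).pow_index_mem_commutator_of_mem_center_s5 hz hzc)
    rwa [map_commutator, subgroupOf_map_subtype] at this
  have hcop' : (N.relIndex C).Coprime (orderOf (x : G)) := by
    rw [orderOf_coe]
    exact hcop.coprime_dvd_left (N.relIndex_dvd_index_of_normal C)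
  obtain ⟨m, hm⟩ := exists_pow_eq_self_of_coprime hcop'
  have hxC : (x : G) ∈ ⁅N ⊓ C, N ⊓ C⁆ := hm ▸ pow_mem hpow m
  rw [← map_subtype_centralizer_singleton, ← map_commutator] at hxC
  exact hx ((mem_map_iff_mem N.subtype_injective).mp hxC)

theorem exists_isPElement_isNonSchur_of_le_of_normal {p : ℕ} (hp : p.Prime) [Finite G]
    {A B : Subgroup G} (hAB : A ≤ B) (hnorm : (A.subgroupOf B).Normal)
    (hrel : (∃ k, A.relIndex B = p ^ k) ∨ (A.relIndex B).Coprime p) (hB : p ∣ Nat.card B)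
    (ihA : p ∣ Nat.card A → ∃ x : A, IsPElement p x ∧ IsNonSchur x) :
    ∃ x : B, IsPElement p x ∧ IsNonSchur x := by
  set N := A.subgroupOf B
  let e : N ≃* A := subgroupOfEquivOfLe hAB
  by_cases hpd : p ∣ A.relIndex B
  · have : Fact p.Prime := ⟨hp⟩
    obtain ⟨k, hk⟩ :=
      hrel.resolve_right fun h => hp.one_lt.ne' (Nat.Coprime.eq_one_of_dvd h.symm hpd)
    rw [relIndex, index_eq_card] at hk hpd
    have : Nontrivial (B ⧸ N) := Finite.one_lt_card_iff_nontrivial.mp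
      (hp.one_lt.trans_le (Nat.le_of_dvd Nat.card_pos hpd))
    exact exists_isPElement_isNonSchur_of_isPGroup_quotient N (IsPGroup.of_card hk)
  · have hA : p ∣ Nat.card A := by
      rw [← N.card_mul_index, Nat.card_congr e.toEquiv] at hB
      exact (hp.dvd_mul.mp hB).resolve_right hpd
    obtain ⟨x, ⟨k, hk⟩, hxs⟩ := ihA hA
    refine ⟨e.symm x, ⟨k, ?_⟩, (hxs.map_equiv e.symm).coe_of_coprime_index ?_⟩
    · rw [orderOf_coe, MulEquiv.orderOf_eq, hk]
    · rw [MulEquiv.orderOf_eq, hk]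
      exact ((hp.coprime_iff_not_dvd.mpr hpd).symm).pow_right k

end

theorem nonSchur_of_pSolvable (p : ℕ) (hp : p.Prime) (G : Type*) [Group G] [Finite G]
    (hG : IsPSolvable p G) (hdvd : p ∣ Nat.card G) :
    ∃ x : G, IsPElement p x ∧ IsNonSchur x := by
  obtain ⟨n, H, h0, hl, hstep⟩ := hG
  have key : ∀ i, p ∣ Nat.card (H i) → ∃ x : H i, IsPElement p x ∧ IsNonSchur x := by
    intro i
    induction i using Fin.induction with
    | zero =>
      rw [h0, card_bot, Nat.dvd_one]
      exact fun h => absurd h hp.ne_one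
    | succ i ih =>
      obtain ⟨hle, hnorm, hrel⟩ := hstep i
      exact fun hB => exists_isPElement_isNonSchur_of_le_of_normal hp hle hnorm hrel hB ih
  obtain ⟨x, hxp, hxs⟩ := key (Fin.last n) (by rwa [hl, card_top])
  let e : H (Fin.last n) ≃* G := (MulEquiv.subgroupCongr hl).trans topEquiv
  exact ⟨e x, hxp.map_equiv e, hxs.map_equiv e⟩
end

section
/- In the symmetric group S_n over n ≥ p elements, let x be a permutation of cycle type (1)^{n-ip}(p)^i (a product of i disjoint p-cycles) with p prime and p not dividing i. Then the image of x in the abelianization of its centralizer C_{S_n}(x), reduced mod p, is nontrivial; i.e., x ∉ [C_{S_n}(x), C_{S_n}(x)] · C_{S_n}(x)^p. In particular x is a non-Schur p-element of S_n. -/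
/-!
Every `g` commuting with `x` permutes the cycles of `x`; once a base point is fixed on every cycle,
`g` sends the base point of a cycle `c` to `x ^ k_c` applied to the base point of `g c`. When all
cycles have the same length `m`, the exponents `k_c` are well defined in `ZMod m`, and their sum is
a homomorphism from the centralizer of `x` to `ZMod m` (on `C_m ≀ S_i` it is the product of the
coordinates). It sends `x` to its number `i` of cycles, which is nonzero in `ZMod p`. As `ZMod p` is
abelian of exponent `p`, the image of `x` in the abelianization of its centralizer is not a `p`-th
power, let alone trivial.
-/

open Finset

namespace Equiv.Perm

variable {α : Type*} {x g h : Perm α} {a b : α}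

noncomputable def cycleRep (x : Perm α) (a : α) : α :=
  (Quotient.mk (SameCycle.setoid x) a).out

theorem sameCycle_cycleRep (x : Perm α) (a : α) : x.SameCycle (x.cycleRep a) a :=
  Quotient.mk_out (s := SameCycle.setoid x) a

theorem SameCycle.cycleRep_eq (hab : x.SameCycle a b) : x.cycleRep a = x.cycleRep b :=
  congrArg Quotient.out (Quotient.sound (s := SameCycle.setoid x) hab)

theorem cycleRep_cycleRep (x : Perm α) (a : α) : x.cycleRep (x.cycleRep a) = x.cycleRep a :=
  (sameCycle_cycleRep x a).cycleRep_eq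

theorem SameCycle.apply_of_commute (hg : Commute x g) (hab : x.SameCycle a b) :
    x.SameCycle (g a) (g b) := by
  obtain ⟨j, rfl⟩ := hab
  exact ⟨j, by rw [← mul_apply, ← mul_apply, (hg.zpow_left j).eq]⟩

theorem cycleRep_apply_cycleRep_of_commute (hg : Commute x g) (a : α) :
    x.cycleRep (g (x.cycleRep a)) = x.cycleRep (g a) :=
  ((sameCycle_cycleRep x a).apply_of_commute hg).cycleRep_eq

/-- The exponent `k` with `(x ^ k) (x.cycleRep a) = a`, well defined in `ZMod m` on the support of
`x` when all cycles of `x` have length `m` (`cycleLog_eq`). -/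
noncomputable def cycleLog (x : Perm α) (m : ℕ) (a : α) : ZMod m :=
  ((sameCycle_cycleRep x a).choose : ZMod m)

variable [Fintype α] [DecidableEq α] {m : ℕ}

theorem apply_mem_support_of_commute (hg : Commute x g) :
    g a ∈ x.support ↔ a ∈ x.support := by
  rw [mem_support, mem_support, ← mul_apply, hg.eq, mul_apply, g.injective.ne_iff]

theorem zpow_apply_eq_zpow_apply_iff (hm : ∀ k ∈ x.cycleType, k = m) (ha : a ∈ x.support)
    {j k : ℤ} : (x ^ j) a = (x ^ k) a ↔ (j : ZMod m) = k := by
  have hcard : #(x.cycleOf a).support = m := hm _ <| by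
    rw [cycleType_def]
    exact Multiset.mem_map_of_mem _ (cycleOf_mem_cycleFactorsFinset_iff.mpr ha)
  rw [zpow_eq_zpow_on_iff x (mem_support.mp ha), hcard, ZMod.intCast_eq_intCast_iff']

theorem cycleLog_eq (hm : ∀ k ∈ x.cycleType, k = m) (ha : a ∈ x.support) {j : ℤ}
    (hj : (x ^ j) (x.cycleRep a) = a) : x.cycleLog m a = j := by
  have hrep : x.cycleRep a ∈ x.support := (sameCycle_cycleRep x a).mem_support_iff.mpr ha
  rw [cycleLog, ← zpow_apply_eq_zpow_apply_iff hm hrep, hj]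
  exact (sameCycle_cycleRep x a).choose_spec

theorem cycleLog_apply_of_commute (hm : ∀ k ∈ x.cycleType, k = m) (hg : Commute x g)
    (ha : a ∈ x.support) :
    x.cycleLog m (g a) = x.cycleLog m a + x.cycleLog m (g (x.cycleRep a)) := by
  obtain ⟨j, hj⟩ := sameCycle_cycleRep x a
  obtain ⟨k, hk⟩ := sameCycle_cycleRep x (g (x.cycleRep a))
  have hga : g a ∈ x.support := (apply_mem_support_of_commute hg).mpr ha
  have hgr : g (x.cycleRep a) ∈ x.support :=
    (apply_mem_support_of_commute hg).mpr ((sameCycle_cycleRep x a).mem_support_iff.mpr ha)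
  have hjk : (x ^ (j + k)) (x.cycleRep (g a)) = g a := by
    rw [zpow_add, mul_apply, ← cycleRep_apply_cycleRep_of_commute hg a, hk, ← mul_apply,
      (hg.zpow_left j).eq, mul_apply, hj]
  rw [cycleLog_eq hm ha hj, cycleLog_eq hm hgr hk, cycleLog_eq hm hga hjk, Int.cast_add]

noncomputable def cycleReps (x : Perm α) : Finset α := x.support.image x.cycleRep

theorem mem_cycleReps : b ∈ x.cycleReps ↔ b ∈ x.support ∧ x.cycleRep b = b := by
  refine ⟨?_, fun ⟨hb, hrep⟩ => mem_image.mpr ⟨b, hb, hrep⟩⟩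
  rintro hb
  obtain ⟨a, ha, rfl⟩ := mem_image.mp hb
  exact ⟨(sameCycle_cycleRep x a).mem_support_iff.mpr ha, cycleRep_cycleRep x a⟩

theorem sum_cycleReps_comp_cycleRep_of_commute {M : Type*} [AddCommMonoid M] (hh : Commute x h)
    (f : α → M) : ∑ b ∈ x.cycleReps, f (x.cycleRep (h b)) = ∑ b ∈ x.cycleReps, f b := by
  have hmaps {k : Perm α} (hk : Commute x k) {b : α} (hb : b ∈ x.cycleReps) :
      x.cycleRep (k b) ∈ x.cycleReps :=
    mem_image_of_mem _ ((apply_mem_support_of_commute hk).mpr (mem_cycleReps.mp hb).1)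
  have hinv {k l : Perm α} (hl : Commute x l) (hlk : l * k = 1) {b : α} (hb : b ∈ x.cycleReps) :
      x.cycleRep (l (x.cycleRep (k b))) = b := by
    rw [cycleRep_apply_cycleRep_of_commute hl, ← mul_apply, hlk, one_apply,
      (mem_cycleReps.mp hb).2]
  exact sum_nbij' (fun b => x.cycleRep (h b)) (fun b => x.cycleRep (h⁻¹ b)) (fun _ => hmaps hh)
    (fun _ => hmaps hh.inv_right) (fun _ => hinv hh.inv_right (inv_mul_cancel h))
    (fun _ => hinv hh (mul_inv_cancel h)) fun _ _ => rfl

noncomputable def cycleShift (x : Perm α) (m : ℕ) (g : Perm α) : ZMod m :=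
  ∑ b ∈ x.cycleReps, x.cycleLog m (g b)

theorem cycleShift_mul (hm : ∀ k ∈ x.cycleType, k = m) (hg : Commute x g) (hh : Commute x h) :
    x.cycleShift m (g * h) = x.cycleShift m g + x.cycleShift m h := by
  have hlog : ∀ b ∈ x.cycleReps, x.cycleLog m ((g * h) b) =
      x.cycleLog m (h b) + x.cycleLog m (g (x.cycleRep (h b))) := fun b hb =>
    cycleLog_apply_of_commute hm hg ((apply_mem_support_of_commute hh).mpr (mem_cycleReps.mp hb).1)
  rw [cycleShift, sum_congr rfl hlog, sum_add_distrib,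
    sum_cycleReps_comp_cycleRep_of_commute hh (fun b => x.cycleLog m (g b)), add_comm]
  rfl

theorem cycleShift_self (hm : ∀ k ∈ x.cycleType, k = m) : x.cycleShift m x = #x.cycleReps := by
  have hlog : ∀ b ∈ x.cycleReps, x.cycleLog m (x b) = 1 := fun b hb => by
    obtain ⟨hsupp, hrep⟩ := mem_cycleReps.mp hb
    have hxrep : x.cycleRep (x b) = b := by
      rw [← (sameCycle_apply_right.mpr (SameCycle.refl x b)).cycleRep_eq, hrep]
    rw [cycleLog_eq hm (apply_mem_support.mpr hsupp) (j := 1) (by rw [hxrep, zpow_one]),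
      Int.cast_one]
  rw [cycleShift, sum_congr rfl hlog, sum_const, nsmul_one]

theorem card_cycleReps : #x.cycleReps = Multiset.card x.cycleType := by
  rw [cycleType_def, Multiset.card_map, ← card_def]
  refine card_nbij x.cycleOf (fun b hb => cycleOf_mem_cycleFactorsFinset_iff.mpr
    (mem_cycleReps.mp hb).1) (fun b hb b' hb' hbb' => ?_) fun c hc => ?_
  · obtain ⟨hb, hrep⟩ := mem_cycleReps.mp hb
    obtain ⟨hb', hrep'⟩ := mem_cycleReps.mp hb'
    have hsame : x.SameCycle b b' := (sameCycle_iff_cycleOf_eq_of_mem_support hb hb').mpr hbb'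
    rw [← hrep, ← hrep', hsame.cycleRep_eq]
  · obtain ⟨a, ha⟩ := (mem_cycleFactorsFinset_iff.mp hc).1.nonempty_support
    have hxa : a ∈ x.support := mem_cycleFactorsFinset_support_le hc ha
    exact ⟨x.cycleRep a, mem_image_of_mem _ hxa,
      ((sameCycle_cycleRep x a).cycleOf_eq).trans (cycle_is_cycleOf ha hc).symm⟩

noncomputable def cycleShiftHom (hm : ∀ k ∈ x.cycleType, k = m) :
    Subgroup.centralizer ({x} : Set (Perm α)) →* Multiplicative (ZMod m) :=
  MonoidHom.mk' (fun g => .ofAdd (x.cycleShift m g)) fun g h =>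
    congrArg Multiplicative.ofAdd <| cycleShift_mul hm
      (Subgroup.mem_centralizer_singleton_iff.mp g.2).symm
      (Subgroup.mem_centralizer_singleton_iff.mp h.2).symm

theorem cycleShiftHom_self (hm : ∀ k ∈ x.cycleType, k = m)
    (hx : x ∈ Subgroup.centralizer ({x} : Set (Perm α))) :
    cycleShiftHom hm ⟨x, hx⟩ = .ofAdd (Multiset.card x.cycleType : ZMod m) := by
  rw [← card_cycleReps, ← cycleShift_self hm]
  rfl

theorem orderOf_eq_of_cycleType_eq_replicate {i : ℕ} (hi : i ≠ 0)
    (hct : x.cycleType = Multiset.replicate i m) : orderOf x = m := by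
  rw [← lcm_cycleType, hct]
  exact Nat.dvd_antisymm (Multiset.lcm_dvd.mpr fun k hk => (Multiset.eq_of_mem_replicate hk).dvd)
    (Multiset.dvd_lcm (Multiset.mem_replicate.mpr ⟨hi, rfl⟩))

end Equiv.Perm

theorem Abelianization.of_notMem_range_powMonoidHom {G : Type*} [Group G] {m : ℕ}
    (φ : G →* Multiplicative (ZMod m)) {y : G} (hy : φ y ≠ 1) :
    of y ∉ (powMonoidHom m : Abelianization G →* Abelianization G).range := by
  rintro ⟨z, hz⟩
  have hexp (w : Multiplicative (ZMod m)) : w ^ m = 1 := by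
    rw [← ofAdd_toAdd w, ← ofAdd_nsmul, nsmul_eq_mul, ZMod.natCast_self, zero_mul, ofAdd_zero]
  apply hy
  rw [← lift_apply_of φ, ← hz, powMonoidHom_apply, map_pow, hexp]

theorem isNonSchur_iff_abelianization_of_ne_one {G : Type*} [Group G] {x : G}
    (hx : x ∈ Subgroup.centralizer {x}) :
    IsNonSchur x ↔ Abelianization.of (⟨x, hx⟩ : Subgroup.centralizer {x}) ≠ 1 := by
  rw [IsNonSchur, ← Subgroup.map_subtype_commutator, ← Abelianization.ker_of, Ne,
    ← MonoidHom.mem_ker]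
  exact (Subgroup.mem_map_iff_mem (x := (⟨x, hx⟩ : Subgroup.centralizer {x}))
    Subtype.val_injective).not

theorem perm_prod_p_cycles_nonSchur_general (p n i : ℕ) (hi : ¬ p ∣ i)
    (x : Equiv.Perm (Fin n)) (hct : x.cycleType = Multiset.replicate i p)
    (hx : x ∈ Subgroup.centralizer {x}) :
    (Abelianization.of (⟨x, hx⟩ : ↥(Subgroup.centralizer ({x} : Set (Equiv.Perm (Fin n)))))
        ∉ (powMonoidHom p : Abelianization ↥(Subgroup.centralizer ({x} : Set (Equiv.Perm (Fin n)))) →*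
            Abelianization ↥(Subgroup.centralizer ({x} : Set (Equiv.Perm (Fin n))))).range) ∧
      IsPElement p x ∧ IsNonSchur x := by
  have hcycles : ∀ k ∈ x.cycleType, k = p := fun k hk => Multiset.eq_of_mem_replicate (hct ▸ hk)
  have hshift : Equiv.Perm.cycleShiftHom hcycles ⟨x, hx⟩ ≠ 1 := by
    rw [Equiv.Perm.cycleShiftHom_self, hct, Multiset.card_replicate, Ne, ofAdd_eq_one,
      ZMod.natCast_eq_zero_iff]
    exact hi
  have hnotMem := Abelianization.of_notMem_range_powMonoidHom _ hshift
  have hi0 : i ≠ 0 := fun h => hi (h ▸ dvd_zero p)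
  refine ⟨hnotMem, ⟨1, by rw [pow_one, x.orderOf_eq_of_cycleType_eq_replicate hi0 hct]⟩, ?_⟩
  rw [isNonSchur_iff_abelianization_of_ne_one hx]
  exact fun h1 => hnotMem ⟨1, by rw [h1, map_one]⟩

/-- A product of i disjoint p-cycles in S_n (p prime, p ∤ i) has nontrivial image in
the mod-p abelianization of its centralizer; in particular it is a non-Schur p-element. -/
theorem perm_prod_p_cycles_nonSchur (p n i : ℕ) (hp : p.Prime) (hn : p ≤ n) (hi : ¬ p ∣ i)
    (x : Equiv.Perm (Fin n)) (hct : x.cycleType = Multiset.replicate i p)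
    (hx : x ∈ Subgroup.centralizer {x}) :
    (Abelianization.of (⟨x, hx⟩ : ↥(Subgroup.centralizer ({x} : Set (Equiv.Perm (Fin n)))))
        ∉ (powMonoidHom p : Abelianization ↥(Subgroup.centralizer ({x} : Set (Equiv.Perm (Fin n)))) →*
            Abelianization ↥(Subgroup.centralizer ({x} : Set (Equiv.Perm (Fin n))))).range) ∧
      IsPElement p x ∧ IsNonSchur x :=
  perm_prod_p_cycles_nonSchur_general p n i hi x hct hx
end

section
/- Let G be a finite group, p a prime, and suppose there is x ∈ P (P a Sylow p-subgroup) with x ∉ [P,P] such that C_P(x) = C_G(x) ∩ P is a Sylow p-subgroup of C_G(x) and [C_G(x) : C_P(x)] is coprime to p. Then the induced map C_P(x)^{ab} ⊗ 𝔽_p → C_G(x)^{ab} ⊗ 𝔽_p is nonzero. (Transfer argument: if it were zero, composing with the transfer map would make the p-part of the composite C_P(x)^{ab}_p → C_G(x)^{ab}_p → C_P(x)^{ab}_p nilpotent, contradicting that the transfer sends x to x^{[C_G(x):C_P(x)]} with exponent coprime to p.) -/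
/-- The map H₁(A, 𝔽_p) → H₁(B, 𝔽_p), modeled as the map on abelianizations
modulo p-th powers induced by a group homomorphism f : A →* B. -/
def h1ModP (p : ℕ) {A B : Type*} [Group A] [Group B] (f : A →* B) :
    Abelianization A ⧸ (powMonoidHom p : Abelianization A →* Abelianization A).range →*
      Abelianization B ⧸ (powMonoidHom p : Abelianization B →* Abelianization B).range :=
  QuotientGroup.map _ _ (Abelianization.map f) (by
    rintro a ⟨y, rfl⟩
    exact ⟨Abelianization.map f y, by simp [powMonoidHom]⟩)

theorem Nat.Prime.dvd_orderOf_pow {M : Type*} [Monoid M] {p n : ℕ} (hp : p.Prime) {a : M}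
    (ha : p ∣ orderOf a) (hn : ¬p ∣ n) : p ∣ orderOf (a ^ n) := by
  have : orderOf a ∣ orderOf (a ^ n) * n :=
    orderOf_dvd_of_pow_eq_one (by rw [mul_comm, pow_mul, pow_orderOf_eq_one])
  exact (hp.dvd_mul.mp (ha.trans this)).resolve_right hn

theorem powMonoidHom_range_ne_top {A : Type*} [CommGroup A] [Finite A] {p : ℕ} (hp : p.Prime)
    (hpA : p ∣ Nat.card A) : (powMonoidHom p : A →* A).range ≠ ⊤ := by
  have := Fact.mk hp
  obtain ⟨b, hb⟩ := exists_prime_orderOf_dvd_card' p hpA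
  intro htop
  have hinj : Function.Injective (powMonoidHom p : A →* A) :=
    Finite.injective_iff_surjective.mpr (MonoidHom.range_eq_top.mp htop)
  have hb1 : b = 1 := hinj (by simp [← hb, pow_orderOf_eq_one])
  exact hp.one_lt.ne' (by rw [← hb, hb1, orderOf_one])

theorem Subgroup.eq_top_of_isPGroup_of_coprime_index {Q : Type*} [Group Q] [Finite Q] {p : ℕ}
    (hp : p.Prime) (hQ : IsPGroup p Q) {K : Subgroup Q} (hK : K.index.Coprime p) : K = ⊤ := by
  have := Fact.mk hp
  obtain ⟨n, hn⟩ := hQ.index K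
  rw [← Subgroup.index_eq_one, hn]
  rcases n with _ | n
  · rfl
  · rw [hn, Nat.coprime_pow_left_iff n.succ_pos, Nat.coprime_self] at hK
    exact absurd hK hp.one_lt.ne'

theorem h1ModP_surjective {A B : Type*} [Group A] [Group B] [Finite B] {p : ℕ} (hp : p.Prime)
    (f : A →* B) (hf : f.range.index.Coprime p) : Function.Surjective (h1ModP p f) := by
  set N := (powMonoidHom p : Abelianization B →* Abelianization B).range
  let ψ : B →* Abelianization B ⧸ N := (QuotientGroup.mk' N).comp Abelianization.of
  have hψ : Function.Surjective ψ :=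
    (QuotientGroup.mk'_surjective N).comp QuotientGroup.mk_surjective
  have hQ : IsPGroup p (Abelianization B ⧸ N) := by
    rintro ⟨b⟩
    exact ⟨1, (QuotientGroup.eq_one_iff _).mpr ⟨b, (pow_one p).symm ▸ rfl⟩⟩
  have htop : f.range.map ψ = ⊤ := Subgroup.eq_top_of_isPGroup_of_coprime_index hp hQ
    (Nat.Coprime.coprime_dvd_left (Subgroup.index_map_dvd _ hψ) hf)
  intro q
  obtain ⟨_, ⟨a, rfl⟩, rfl⟩ := htop ▸ Subgroup.mem_top q
  exact ⟨Abelianization.of a, rfl⟩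

theorem h1ModP_ne_one_of_dvd_card {A B : Type*} [Group A] [Group B] [Finite B] {p : ℕ}
    (hp : p.Prime) (f : A →* B) (hf : f.range.index.Coprime p)
    (hB : p ∣ Nat.card (Abelianization B)) : h1ModP p f ≠ 1 := by
  intro h
  refine powMonoidHom_range_ne_top hp hB (eq_top_iff.mpr fun b _ => ?_)
  obtain ⟨q, hq⟩ := h1ModP_surjective hp f hf (QuotientGroup.mk b)
  rw [h] at hq
  exact (QuotientGroup.eq_one_iff b).mp hq.symm

theorem MonoidHom.transfer_eq_pow_of_mem_center {G A : Type*} [Group G] [CommGroup A]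
    {H : Subgroup G} [H.FiniteIndex] (ϕ : H →* A) {g : G} (hg : g ∈ Subgroup.center G)
    (hgH : g ∈ H) : ϕ.transfer g = ϕ ⟨g, hgH⟩ ^ H.index := by
  rw [ϕ.transfer_eq_pow g fun k g₀ _ => by
    rw [mul_assoc, ← Subgroup.mem_center_iff.mp (pow_mem hg k) g₀, inv_mul_cancel_left], ← map_pow]
  rfl

theorem dvd_orderOf_abelianization_of_mem_center {G A : Type*} [Group G] [CommGroup A] {p : ℕ}
    (hp : p.Prime) {H : Subgroup G} [H.FiniteIndex] (hH : H.index.Coprime p) (ϕ : H →* A)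
    {g : G} (hg : g ∈ Subgroup.center G) (hgH : g ∈ H) (hϕ : p ∣ orderOf (ϕ ⟨g, hgH⟩)) :
    p ∣ orderOf (Abelianization.of g) :=
  calc p ∣ orderOf (ϕ ⟨g, hgH⟩ ^ H.index) :=
        hp.dvd_orderOf_pow hϕ (hp.coprime_iff_not_dvd.mp hH.symm)
    _ = orderOf (Abelianization.lift ϕ.transfer (Abelianization.of g)) := by
        rw [Abelianization.lift_apply_of, ϕ.transfer_eq_pow_of_mem_center hg hgH]
    _ ∣ orderOf (Abelianization.of g) := orderOf_map_dvd _ _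

theorem Abelianization.of_eq_one_iff_mem_commutator {G : Type*} [Group G] {H : Subgroup G}
    {x : G} (hx : x ∈ H) : Abelianization.of (⟨x, hx⟩ : H) = 1 ↔ x ∈ ⁅H, H⁆ := by
  rw [← MonoidHom.mem_ker, Abelianization.ker_of, ← H.map_subtype_commutator,
    ← Subgroup.mem_map_iff_mem H.subtype_injective]
  rfl

theorem h1_map_ne_trivial_of_transfer_general (p : ℕ) (hp : p.Prime) (G : Type*) [Group G]
    [Finite G] (P : Sylow p G) (x : G) (hxP : x ∈ (P : Subgroup G))
    (hx' : x ∉ ⁅(P : Subgroup G), (P : Subgroup G)⁆)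
    (hsyl : Nat.Coprime
      (((P : Subgroup G) ⊓ Subgroup.centralizer {x}).relIndex (Subgroup.centralizer {x})) p) :
    h1ModP p (Subgroup.inclusion
        (inf_le_right : (P : Subgroup G) ⊓ Subgroup.centralizer {x} ≤
          Subgroup.centralizer {x})) ≠ 1 := by
  set C := Subgroup.centralizer {x}
  set S := (P : Subgroup G) ⊓ C
  have hxC : x ∈ C := Subgroup.mem_centralizer_singleton_iff.mpr rfl
  have hxS : (⟨x, hxC⟩ : C) ∈ S.subgroupOf C := Subgroup.mem_subgroupOf.mpr ⟨hxP, hxC⟩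
  have hx_center : (⟨x, hxC⟩ : C) ∈ Subgroup.center C :=
    Subgroup.mem_center_iff.mpr fun g => Subtype.ext (Subgroup.mem_centralizer_singleton_iff.mp g.2)
  let ϕ : S.subgroupOf C →* Abelianization P := Abelianization.of.comp
    ((Subgroup.inclusion inf_le_left).comp (Subgroup.subgroupOfEquivOfLe inf_le_right).toMonoidHom)
  have hϕ : p ∣ orderOf (ϕ ⟨⟨x, hxC⟩, hxS⟩) :=
    have := Fact.mk hp
    (P.isPGroup'.of_surjective Abelianization.of QuotientGroup.mk_surjective).dvd_orderOf
      ((Abelianization.of_eq_one_iff_mem_commutator hxP).not.mpr hx')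
  have hpC : p ∣ Nat.card (Abelianization C) :=
    (dvd_orderOf_abelianization_of_mem_center hp hsyl ϕ hx_center hxS hϕ).trans
      (orderOf_dvd_natCard _)
  exact h1ModP_ne_one_of_dvd_card hp _ (by rwa [Subgroup.inclusion_range]) hpC

/-- Transfer argument: if x ∈ P, x ∉ [P,P], and C_P(x) = P ⊓ C_G(x) is a Sylow
p-subgroup of C_G(x) of index coprime to p, then the induced map
H₁(C_P(x), 𝔽_p) → H₁(C_G(x), 𝔽_p) is nonzero. -/
theorem h1_map_ne_trivial_of_transfer (p : ℕ) (hp : p.Prime) (G : Type*) [Group G]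
    [Finite G] (P : Sylow p G) (x : G) (hxP : x ∈ (P : Subgroup G))
    (hx' : x ∉ ⁅(P : Subgroup G), (P : Subgroup G)⁆)
    (hpgrp : IsPGroup p ↥((P : Subgroup G) ⊓ Subgroup.centralizer {x}))
    (hsyl : Nat.Coprime
      (((P : Subgroup G) ⊓ Subgroup.centralizer {x}).relIndex (Subgroup.centralizer {x})) p) :
    h1ModP p (Subgroup.inclusion
        (inf_le_right : (P : Subgroup G) ⊓ Subgroup.centralizer {x} ≤
          Subgroup.centralizer {x})) ≠ 1 :=
  h1_map_ne_trivial_of_transfer_general p hp G P x hxP hx' hsyl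
end
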